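/- Fix dimensions n_x, n_y and data: an n_x×n_x symmetric positive semidefinite matrix S, a real λ > 0, an n_x×n_x symmetric matrix P with P ≺ λI, matrices A ∈ ℝ^{n_x×n_x} and C ∈ ℝ^{n_y×n_x}, an n_x×n_x symmetric positive semidefinite matrix Σ_prev, an n_x×n_x symmetric positive semidefinite matrix Σ̂_w, an n_y×n_y symmetric positive definite matrix Σ̂_v, and θ_v > 0. Consider: (i) the nonlinear program maximizing, over n_x×n_x symmetric positive semidefinite Σ_w and n_y×n_y symmetric positive definite Σ_v satisfying Tr[Σ_v + Σ̂_v − 2 (Σ̂_v^{1/2} Σ_v Σ̂_v^{1/2})^{1/2}] ≤ θ_v², the objective Tr[S Σ_x] + Tr[(P − λI) Σ_w] + 2λ Tr[(Σ̂_w^{1/2} Σ_w Σ̂_w^{1/2})^{1/2}], where Σ⁻ := A Σ_prev Aᵀ + Σ_w and Σ_x := Σ⁻ − Σ⁻ Cᵀ (C Σ⁻ Cᵀ + Σ_v)⁻¹ C Σ⁻; and (ii) the semidefinite program maximizing Tr[S Σ_x] + Tr[(P − λI) Σ_w] + 2λ Tr[Y] over variables Σ⁻, Σ_x, Σ_w (n_x×n_x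 symmetric positive semidefinite), Σ_v (n_y×n_y symmetric positive definite), Y ∈ ℝ^{n_x×n_x}, Z ∈ ℝ^{n_y×n_y}, subject to: the block matrix [[Σ⁻ − Σ_x, Σ⁻ Cᵀ], [C Σ⁻, C Σ⁻ Cᵀ + Σ_v]] is positive semidefinite; [[Σ̂_w, Y], [Yᵀ, Σ_w]] is positive semidefinite; [[Σ̂_v, Z], [Zᵀ, Σ_v]] is positive semidefinite; Σ⁻ = A Σ_prev Aᵀ + Σ_w; and Tr[Σ_v + Σ̂_v − 2Z] ≤ θ_v². Then the optimal values (suprema) of (i) and (ii) are equal. -/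

import Mathlib

set_option linter.unusedSectionVars false
set_option maxHeartbeats 1000000

open Matrix

/-- The symmetric positive semidefinite square root of a positive semidefinite
real matrix (junk value `0` on non-PSD matrices). -/
noncomputable def psdSqrt {n : ℕ} (M : Matrix (Fin n) (Fin n) ℝ) :
    Matrix (Fin n) (Fin n) ℝ :=
  open scoped Classical in
  if h : M.PosSemidef then
    (h.1.eigenvectorUnitary : Matrix (Fin n) (Fin n) ℝ) *
      diagonal ((RCLike.ofReal : ℝ → ℝ) ∘ Real.sqrt ∘ h.1.eigenvalues) *
      (star h.1.eigenvectorUnitary : Matrix (Fin n) (Fin n) ℝ)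
  else 0

namespace DRKF

open scoped MatrixOrder

variable {m : Type*} [Fintype m] [DecidableEq m]

/-- general-index version of `psdSqrt`. -/
noncomputable def sq (M : Matrix m m ℝ) : Matrix m m ℝ :=
  open scoped Classical in
  if h : M.PosSemidef then CFC.sqrt M else 0

lemma sq_of_psd {M : Matrix m m ℝ} (h : M.PosSemidef) : sq M = CFC.sqrt M := dif_pos h

lemma sq_posSemidef {M : Matrix m m ℝ} (h : M.PosSemidef) : (sq M).PosSemidef := by
  rw [sq_of_psd h]; exact (CFC.sqrt_nonneg M).posSemidef

lemma sq_mul_self {M : Matrix m m ℝ} (h : M.PosSemidef) : sq M * sq M = M := by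
  rw [sq_of_psd h]; exact CFC.sqrt_mul_sqrt_self M h.nonneg

lemma conjT {l : Type*} (M : Matrix l m ℝ) : Mᴴ = Mᵀ :=
  conjTranspose_eq_transpose_of_trivial M

lemma psd_transpose_eq {M : Matrix m m ℝ} (h : M.PosSemidef) : Mᵀ = M := by
  rw [← conjT]; exact h.1

lemma sq_transpose {M : Matrix m m ℝ} (h : M.PosSemidef) : (sq M)ᵀ = sq M :=
  psd_transpose_eq (sq_posSemidef h)

lemma psd_mul_mul_transpose {l : Type*} [Fintype l] {M : Matrix m m ℝ}
    (h : M.PosSemidef) (B : Matrix l m ℝ) : (B * M * Bᵀ).PosSemidef := by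
  rw [← conjT]; exact h.mul_mul_conjTranspose_same B

lemma psd_transpose_mul_mul {l : Type*} [Fintype l] [DecidableEq l] {M : Matrix m m ℝ}
    (h : M.PosSemidef) (B : Matrix m l ℝ) : (Bᵀ * M * B).PosSemidef := by
  rw [← conjT]; exact h.conjTranspose_mul_mul_same B

lemma psd_transpose_mul_self {l : Type*} [Fintype l] (B : Matrix l m ℝ) :
    (Bᵀ * B).PosSemidef := by
  rw [← conjT]; exact posSemidef_conjTranspose_mul_self B

lemma sq_unique {M B : Matrix m m ℝ} (hB : B.PosSemidef) (hBB : B * B = M) : sq M = B := by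
  have hM : M.PosSemidef := by
    rw [← hBB]
    nth_rewrite 1 [← psd_transpose_eq hB]
    exact psd_transpose_mul_self B
  rw [sq_of_psd hM]
  exact (CFC.sqrt_eq_iff M B hM.nonneg hB.nonneg).mpr hBB

lemma sq_sq {M : Matrix m m ℝ} (h : M.PosSemidef) : sq (sq M * M * sq M) = M := by
  refine sq_unique h ?_
  calc M * M = (sq M * sq M) * (sq M * sq M) := by rw [sq_mul_self h]
    _ = sq M * (sq M * sq M) * sq M := by
        simp only [Matrix.mul_assoc]
    _ = sq M * M * sq M := by rw [sq_mul_self h]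

lemma trace_nonneg_of_psd {M : Matrix m m ℝ} (h : M.PosSemidef) : 0 ≤ M.trace := by
  rw [Matrix.trace]
  refine Finset.sum_nonneg fun i _ => ?_
  have h2 := h.dotProduct_mulVec_nonneg (Pi.single i 1)
  simpa [Matrix.diag, Matrix.mulVec_single] using h2

lemma trace_mul_nonneg {M N : Matrix m m ℝ} (hM : M.PosSemidef) (hN : N.PosSemidef) :
    0 ≤ (M * N).trace := by
  have h1 : M * N = sq M * (sq M * N) := by rw [← Matrix.mul_assoc, sq_mul_self hM]
  rw [h1, trace_mul_comm, Matrix.mul_assoc]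
  refine trace_nonneg_of_psd ?_
  have := psd_mul_mul_transpose hN (sq M)ᵀ
  rw [transpose_transpose, sq_transpose hM, Matrix.mul_assoc] at this
  exact this

lemma trace_mul_mono {M X Y : Matrix m m ℝ} (hM : M.PosSemidef)
    (hXY : (Y - X).PosSemidef) : (M * X).trace ≤ (M * Y).trace := by
  have := trace_mul_nonneg hM hXY
  rw [Matrix.mul_sub, trace_sub] at this
  linarith


lemma psd_apply {M : Matrix m m ℝ} (h : M.PosSemidef) (x : m → ℝ) :
    0 ≤ x ⬝ᵥ M *ᵥ x := by simpa using h.dotProduct_mulVec_nonneg x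

lemma pd_apply {M : Matrix m m ℝ} (h : M.PosDef) {x : m → ℝ} (hx : x ≠ 0) :
    0 < x ⬝ᵥ M *ᵥ x := by simpa using h.dotProduct_mulVec_pos hx

lemma psd_of {M : Matrix m m ℝ} (hsym : Mᵀ = M) (hpos : ∀ x, 0 ≤ x ⬝ᵥ M *ᵥ x) :
    M.PosSemidef := .of_dotProduct_mulVec_nonneg ((conjT M).trans hsym) fun x => by simpa using hpos x

lemma pd_of {M : Matrix m m ℝ} (hsym : Mᵀ = M) (hpos : ∀ x, x ≠ 0 → 0 < x ⬝ᵥ M *ᵥ x) :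
    M.PosDef := .of_dotProduct_mulVec_pos ((conjT M).trans hsym) fun x hx => by simpa using hpos x hx

lemma psd_smul {M : Matrix m m ℝ} (h : M.PosSemidef) {c : ℝ} (hc : 0 ≤ c) :
    (c • M).PosSemidef := by
  refine psd_of ?_ fun x => ?_
  · rw [transpose_smul, psd_transpose_eq h]
  · rw [smul_mulVec, dotProduct_smul]
    exact mul_nonneg hc (psd_apply h x)

lemma pd_smul {M : Matrix m m ℝ} (h : M.PosDef) {c : ℝ} (hc : 0 < c) :
    (c • M).PosDef := by
  refine pd_of ?_ fun x hx => ?_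
  · rw [transpose_smul, psd_transpose_eq h.posSemidef]
  · rw [smul_mulVec, dotProduct_smul]
    exact mul_pos hc (pd_apply h hx)

lemma pd_smul_one {c : ℝ} (hc : 0 < c) : (c • (1 : Matrix m m ℝ)).PosDef :=
  pd_smul Matrix.PosDef.one hc

lemma pd_isUnit_det {M : Matrix m m ℝ} (h : M.PosDef) : IsUnit M.det :=
  isUnit_iff_ne_zero.2 h.det_pos.ne'

lemma pd_mul_inv {M : Matrix m m ℝ} (h : M.PosDef) : M * M⁻¹ = 1 :=
  Matrix.mul_nonsing_inv M (pd_isUnit_det h)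

lemma pd_inv_mul {M : Matrix m m ℝ} (h : M.PosDef) : M⁻¹ * M = 1 :=
  Matrix.nonsing_inv_mul M (pd_isUnit_det h)

lemma sq_posDef {X : Matrix m m ℝ} (hX : X.PosDef) : (sq X).PosDef := by
  have hpsd := sq_posSemidef hX.posSemidef
  refine pd_of (sq_transpose hX.posSemidef) fun x hx => ?_
  rcases lt_or_eq_of_le (psd_apply hpsd x) with h | h
  · exact h
  · exfalso
    have hz : sq X *ᵥ x = 0 := by
      rw [← hpsd.dotProduct_mulVec_zero_iff x]
      simpa using h.symm
    have hXx : X *ᵥ x = 0 := by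
      rw [← sq_mul_self hX.posSemidef, ← Matrix.mulVec_mulVec, hz, Matrix.mulVec_zero]
    have := pd_apply hX hx
    rw [hXx, dotProduct_zero] at this
    exact lt_irrefl 0 this

lemma dot_conj (M B : Matrix m m ℝ) (x : m → ℝ) :
    x ⬝ᵥ (B * M * Bᵀ) *ᵥ x = (Bᵀ *ᵥ x) ⬝ᵥ M *ᵥ (Bᵀ *ᵥ x) := by
  have h1 : (B * M * Bᵀ) *ᵥ x = B *ᵥ (M *ᵥ (Bᵀ *ᵥ x)) := by
    simp [Matrix.mulVec_mulVec, Matrix.mul_assoc]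
  rw [h1, Matrix.dotProduct_mulVec x B, Matrix.mulVec_transpose]

lemma pd_mul_mul_transpose {M B : Matrix m m ℝ} (hM : M.PosDef) (hB : IsUnit B.det) :
    (B * M * Bᵀ).PosDef := by
  refine pd_of ?_ fun x hx => ?_
  · rw [transpose_mul, transpose_mul, transpose_transpose, psd_transpose_eq hM.posSemidef,
      Matrix.mul_assoc]
  · rw [dot_conj]
    refine pd_apply hM fun hzero => hx ?_
    have hBt : IsUnit Bᵀ.det := by rwa [Matrix.det_transpose]
    have : (Bᵀ)⁻¹ *ᵥ (Bᵀ *ᵥ x) = x := by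
      rw [Matrix.mulVec_mulVec, Matrix.nonsing_inv_mul _ hBt, Matrix.one_mulVec]
    rw [← this, hzero, Matrix.mulVec_zero]


lemma dot_mulVec_left (M : Matrix m m ℝ) (a b : m → ℝ) :
    (M *ᵥ a) ⬝ᵥ b = a ⬝ᵥ (Mᵀ *ᵥ b) := by
  rw [dotProduct_comm, Matrix.dotProduct_mulVec, ← Matrix.mulVec_transpose, dotProduct_comm]

lemma cs_trace {l : Type*} [Fintype l] [DecidableEq l]
    (L₁ L₂ : Matrix l m ℝ) {X : Matrix m m ℝ} (hX : X.PosDef) :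
    (L₁ᵀ * L₂).trace ≤ ((L₁ᵀ * L₁ * X).trace + (L₂ᵀ * L₂ * X⁻¹).trace) / 2 := by
  set R := sq X with hRdef
  have hRpd : R.PosDef := sq_posDef hX
  have hRR : R * R = X := sq_mul_self hX.posSemidef
  have hRT : Rᵀ = R := sq_transpose hX.posSemidef
  have hRiT : (R⁻¹)ᵀ = R⁻¹ := by rw [Matrix.transpose_nonsing_inv, hRT]
  have hXinv : R⁻¹ * R⁻¹ = X⁻¹ := by rw [← Matrix.mul_inv_rev, hRR]
  have key : 0 ≤ ((L₁ * R - L₂ * R⁻¹)ᵀ * (L₁ * R - L₂ * R⁻¹)).trace :=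
    trace_nonneg_of_psd (psd_transpose_mul_self _)
  have hK : (L₁ * R - L₂ * R⁻¹)ᵀ * (L₁ * R - L₂ * R⁻¹)
      = (R * (L₁ᵀ * (L₁ * R)) - R * (L₁ᵀ * (L₂ * R⁻¹)))
        - (R⁻¹ * (L₂ᵀ * (L₁ * R)) - R⁻¹ * (L₂ᵀ * (L₂ * R⁻¹))) := by
    rw [transpose_sub, transpose_mul, transpose_mul, hRT, hRiT, Matrix.sub_mul,
      Matrix.mul_sub, Matrix.mul_sub]
    simp only [Matrix.mul_assoc]
  have e1 : (R * (L₁ᵀ * (L₁ * R))).trace = (L₁ᵀ * L₁ * X).trace := by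
    rw [trace_mul_comm]
    simp only [Matrix.mul_assoc, hRR]
  have e2 : (R * (L₁ᵀ * (L₂ * R⁻¹))).trace = (L₁ᵀ * L₂).trace := by
    rw [trace_mul_comm]
    simp only [Matrix.mul_assoc, pd_inv_mul hRpd, Matrix.mul_one]
  have e3 : (R⁻¹ * (L₂ᵀ * (L₁ * R))).trace = (L₁ᵀ * L₂).trace := by
    rw [trace_mul_comm]
    simp only [Matrix.mul_assoc, pd_mul_inv hRpd, Matrix.mul_one]
    rw [← Matrix.trace_transpose, transpose_mul, transpose_transpose]
  have e4 : (R⁻¹ * (L₂ᵀ * (L₂ * R⁻¹))).trace = (L₂ᵀ * L₂ * X⁻¹).trace := by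
    rw [trace_mul_comm]
    simp only [Matrix.mul_assoc, hXinv]
  rw [hK, trace_sub, trace_sub, trace_sub, e1, e2, e3, e4] at key
  linarith

/-- variational upper bound for the trace of the square root. -/
lemma trace_sq_le {M X : Matrix m m ℝ} (hM : M.PosSemidef) (hX : X.PosDef) :
    (sq M).trace ≤ ((M * X⁻¹).trace + X.trace) / 2 := by
  have h := cs_trace (1 : Matrix m m ℝ) (sq M) hX
  rw [transpose_one, Matrix.one_mul, Matrix.one_mul, Matrix.one_mul,
    sq_transpose hM, sq_mul_self hM] at h
  linarith

lemma trace_sq_sq_inv_le {s : Matrix m m ℝ} (hs : s.PosSemidef) {η : ℝ} (hη : 0 < η) :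
    (s * s * (s + η • (1 : Matrix m m ℝ))⁻¹).trace ≤ s.trace := by
  set J := (s + η • (1 : Matrix m m ℝ))⁻¹ with hJdef
  have hpd : (s + η • (1 : Matrix m m ℝ)).PosDef := Matrix.PosDef.posSemidef_add hs (pd_smul_one hη)
  have hid : s = s * s * J + η • (s * J) := by
    have h1 : s * ((s + η • (1 : Matrix m m ℝ)) * J) = s := by
      rw [pd_mul_inv hpd, Matrix.mul_one]
    calc s = s * ((s + η • (1 : Matrix m m ℝ)) * J) := h1.symm
      _ = s * s * J + η • (s * J) := by
          rw [Matrix.add_mul, Matrix.smul_mul, Matrix.one_mul, Matrix.mul_add,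
            Matrix.mul_smul, ← Matrix.mul_assoc]
  have hJpsd : J.PosSemidef := hpd.inv.posSemidef
  have h0 : 0 ≤ (s * J).trace := trace_mul_nonneg hs hJpsd
  have := congrArg Matrix.trace hid
  rw [trace_add, trace_smul, smul_eq_mul] at this
  nlinarith

lemma le_of_forall_eta {a b c : ℝ} (hc : 0 ≤ c) (h : ∀ η : ℝ, 0 < η → a ≤ b + η * c) :
    a ≤ b := by
  by_contra hlt
  push_neg at hlt
  have := h ((a - b) / (2 * (c + 1))) (div_pos (by linarith) (by linarith))
  have hcc : (a - b) / (2 * (c + 1)) * c ≤ (a - b) / 2 := by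
    rw [div_mul_eq_mul_div, div_le_div_iff₀ (by positivity) (by norm_num)]
    nlinarith
  linarith

/-- trace of sqrt is monotone. -/
lemma trace_sq_mono {M₁ M₂ : Matrix m m ℝ} (h1 : M₁.PosSemidef) (h2 : M₂.PosSemidef)
    (h12 : (M₂ - M₁).PosSemidef) : (sq M₁).trace ≤ (sq M₂).trace := by
  refine le_of_forall_eta (c := (Fintype.card m : ℝ) / 2) (by positivity) fun η hη => ?_
  set X := sq M₂ + η • (1 : Matrix m m ℝ) with hXdef
  have hXpd : X.PosDef := Matrix.PosDef.posSemidef_add (sq_posSemidef h2) (pd_smul_one hη)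
  have hV := trace_sq_le h1 hXpd
  have hmono : (M₁ * X⁻¹).trace ≤ (M₂ * X⁻¹).trace := by
    rw [trace_mul_comm M₁, trace_mul_comm M₂]
    exact trace_mul_mono hXpd.inv.posSemidef h12
  have hT : (M₂ * X⁻¹).trace ≤ (sq M₂).trace := by
    have := trace_sq_sq_inv_le (sq_posSemidef h2) hη
    rwa [sq_mul_self h2] at this
  have hX : X.trace = (sq M₂).trace + η * (Fintype.card m : ℝ) := by
    rw [hXdef, trace_add, trace_smul, trace_one, smul_eq_mul]
  rw [hX] at hV
  linarith

/-- inverse is antitone on positive definite matrices. -/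
lemma inv_antitone {P Q : Matrix m m ℝ} (hP : P.PosDef) (hQ : Q.PosDef)
    (hPQ : (Q - P).PosSemidef) : (P⁻¹ - Q⁻¹).PosSemidef := by
  have hPiT : (P⁻¹)ᵀ = P⁻¹ := by
    rw [Matrix.transpose_nonsing_inv, psd_transpose_eq hP.posSemidef]
  have hQiT : (Q⁻¹)ᵀ = Q⁻¹ := by
    rw [Matrix.transpose_nonsing_inv, psd_transpose_eq hQ.posSemidef]
  refine psd_of (by rw [transpose_sub, hPiT, hQiT]) fun x => ?_
  set y := Q⁻¹ *ᵥ x with hy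
  set c := x ⬝ᵥ Q⁻¹ *ᵥ x with hc
  have hc0 : 0 ≤ c := psd_apply hQ.inv.posSemidef x
  set R := sq P with hR
  have hRpd := sq_posDef hP
  have hRR : R * R = P := sq_mul_self hP.posSemidef
  have hRT : Rᵀ = R := sq_transpose hP.posSemidef
  have hRiT : (R⁻¹)ᵀ = R⁻¹ := by rw [Matrix.transpose_nonsing_inv, hRT]
  set u := R *ᵥ y with hu
  set v := R⁻¹ *ᵥ x with hv
  have huv : u ⬝ᵥ v = c := by
    rw [hu, dot_mulVec_left, hRT, hv, Matrix.mulVec_mulVec, pd_mul_inv hRpd,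
      Matrix.one_mulVec, dotProduct_comm]
  have huu : u ⬝ᵥ u = y ⬝ᵥ P *ᵥ y := by
    rw [hu, dot_mulVec_left, hRT, Matrix.mulVec_mulVec, hRR]
  have hvv : v ⬝ᵥ v = x ⬝ᵥ P⁻¹ *ᵥ x := by
    rw [hv, dot_mulVec_left, hRiT, Matrix.mulVec_mulVec, ← Matrix.mul_inv_rev, hRR]
  have hyQy : y ⬝ᵥ Q *ᵥ y = c := by
    rw [hy, Matrix.mulVec_mulVec, pd_mul_inv hQ, Matrix.one_mulVec, dotProduct_comm,
      ← hy]
  have hPle : y ⬝ᵥ P *ᵥ y ≤ c := by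
    have := psd_apply hPQ y
    rw [Matrix.sub_mulVec, dotProduct_sub, hyQy] at this
    linarith
  have hcs : (u ⬝ᵥ v) ^ 2 ≤ (u ⬝ᵥ u) * (v ⬝ᵥ v) := by
    simpa [dotProduct, pow_two, Finset.sum_mul_sq_le_sq_mul_sq] using
      Finset.sum_mul_sq_le_sq_mul_sq Finset.univ u v
  have hPinvx : 0 ≤ x ⬝ᵥ P⁻¹ *ᵥ x := psd_apply hP.inv.posSemidef x
  have hkey : c ^ 2 ≤ c * (x ⬝ᵥ P⁻¹ *ᵥ x) := by
    calc c ^ 2 = (u ⬝ᵥ v) ^ 2 := by rw [huv]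
      _ ≤ (u ⬝ᵥ u) * (v ⬝ᵥ v) := hcs
      _ = (y ⬝ᵥ P *ᵥ y) * (x ⬝ᵥ P⁻¹ *ᵥ x) := by rw [huu, hvv]
      _ ≤ c * (x ⬝ᵥ P⁻¹ *ᵥ x) := by
          exact mul_le_mul_of_nonneg_right hPle hPinvx
  have hgoal : c ≤ x ⬝ᵥ P⁻¹ *ᵥ x := by
    rcases eq_or_lt_of_le hc0 with h0 | h0
    · rw [← h0]; exact hPinvx
    · nlinarith
  rw [Matrix.sub_mulVec, dotProduct_sub]
  linarith

/-- subadditivity of trace of the square root. -/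
lemma trace_sq_subadd {M E : Matrix m m ℝ} (hM : M.PosSemidef) (hE : E.PosSemidef) :
    (sq (M + E)).trace ≤ (sq M).trace + (sq E).trace := by
  refine le_of_forall_eta (c := (Fintype.card m : ℝ) / 2) (by positivity) fun η hη => ?_
  set X := sq M + sq E + η • (1 : Matrix m m ℝ) with hXdef
  have hXpd : X.PosDef :=
    Matrix.PosDef.posSemidef_add ((sq_posSemidef hM).add (sq_posSemidef hE)) (pd_smul_one hη)
  have hV := trace_sq_le (hM.add hE) hXpd
  have hMle : (M * X⁻¹).trace ≤ (sq M).trace := by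
    have hPpd : (sq M + η • (1 : Matrix m m ℝ)).PosDef :=
      Matrix.PosDef.posSemidef_add (sq_posSemidef hM) (pd_smul_one hη)
    have hdiff : (X - (sq M + η • (1 : Matrix m m ℝ))).PosSemidef := by
      have : X - (sq M + η • (1 : Matrix m m ℝ)) = sq E := by
        rw [hXdef]; abel
      rw [this]; exact sq_posSemidef hE
    have hIA := inv_antitone hPpd hXpd hdiff
    have h1 : (M * X⁻¹).trace ≤ (M * (sq M + η • (1 : Matrix m m ℝ))⁻¹).trace :=
      trace_mul_mono hM hIA
    have h2 := trace_sq_sq_inv_le (sq_posSemidef hM) hη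
    rw [sq_mul_self hM] at h2
    linarith
  have hEle : (E * X⁻¹).trace ≤ (sq E).trace := by
    have hPpd : (sq E + η • (1 : Matrix m m ℝ)).PosDef :=
      Matrix.PosDef.posSemidef_add (sq_posSemidef hE) (pd_smul_one hη)
    have hdiff : (X - (sq E + η • (1 : Matrix m m ℝ))).PosSemidef := by
      have : X - (sq E + η • (1 : Matrix m m ℝ)) = sq M := by
        rw [hXdef]; abel
      rw [this]; exact sq_posSemidef hM
    have hIA := inv_antitone hPpd hXpd hdiff
    have h1 : (E * X⁻¹).trace ≤ (E * (sq E + η • (1 : Matrix m m ℝ))⁻¹).trace :=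
      trace_mul_mono hE hIA
    have h2 := trace_sq_sq_inv_le (sq_posSemidef hE) hη
    rw [sq_mul_self hE] at h2
    linarith
  have hsum : ((M + E) * X⁻¹).trace = (M * X⁻¹).trace + (E * X⁻¹).trace := by
    rw [Matrix.add_mul, trace_add]
  have hX : X.trace = (sq M).trace + (sq E).trace + η * (Fintype.card m : ℝ) := by
    rw [hXdef, trace_add, trace_add, trace_smul, trace_one, smul_eq_mul]
  rw [hsum, hX] at hV
  linarith

lemma sq_smul {B : Matrix m m ℝ} (hB : B.PosSemidef) {c : ℝ} (hc : 0 ≤ c) :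
    sq (c • B) = Real.sqrt c • sq B := by
  refine sq_unique (psd_smul (sq_posSemidef hB) (Real.sqrt_nonneg c)) ?_
  rw [Matrix.smul_mul, Matrix.mul_smul, smul_smul, Real.mul_self_sqrt hc, sq_mul_self hB]


lemma inner_eq_dot (x y : EuclideanSpace ℝ m) :
    (inner ℝ x y : ℝ) = (x : m → ℝ) ⬝ᵥ (y : m → ℝ) := by
  simp [PiLp.inner_apply, RCLike.inner_apply, dotProduct, mul_comm]

/-- polar decomposition of a real square matrix. -/
lemma polar (X : Matrix m m ℝ) :
    ∃ W : Matrix m m ℝ, Wᵀ * W = 1 ∧ X = W * sq (Xᵀ * X) := by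
  classical
  have hXX : (Xᵀ * X).PosSemidef := psd_transpose_mul_self X
  set H := sq (Xᵀ * X) with hHdef
  have hH : H.PosSemidef := sq_posSemidef hXX
  have hHH : H * H = Xᵀ * X := sq_mul_self hXX
  set d : m → ℝ := hH.1.eigenvalues with hd
  set q := hH.1.eigenvectorBasis with hqdef
  have hdnn : ∀ i, 0 ≤ d i := hH.eigenvalues_nonneg
  have hmv : ∀ j, H *ᵥ ⇑(q j) = d j • ⇑(q j) := hH.1.mulVec_eigenvectorBasis
  have hqij : ∀ i j, ⇑(q i) ⬝ᵥ ⇑(q j) = if i = j then 1 else 0 := by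
    intro i j
    have h := q.orthonormal
    rw [orthonormal_iff_ite] at h
    have h2 := h i j
    rw [inner_eq_dot] at h2
    simpa using h2
  have hXq : ∀ i j, (X *ᵥ ⇑(q i)) ⬝ᵥ (X *ᵥ ⇑(q j)) = d j * d j * (⇑(q i) ⬝ᵥ ⇑(q j)) := by
    intro i j
    rw [dot_mulVec_left, Matrix.mulVec_mulVec, ← hHH, ← Matrix.mulVec_mulVec, hmv,
      Matrix.mulVec_smul, hmv, dotProduct_smul, dotProduct_smul]
    simp [smul_eq_mul]; ring
  set s : Set m := {i | d i ≠ 0} with hs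
  set v : m → EuclideanSpace ℝ m := fun i => WithLp.toLp 2 ((d i)⁻¹ • (X *ᵥ ⇑(q i))) with hv
  have hvon : Orthonormal ℝ (s.restrict v) := by
    rw [orthonormal_iff_ite]
    intro i j
    rw [inner_eq_dot]
    have hii : (i : m) ∈ s := i.2
    have hjj : (j : m) ∈ s := j.2
    have hdi : d (i : m) ≠ 0 := hii
    have hdj : d (j : m) ≠ 0 := hjj
    show ((d (i:m))⁻¹ • (X *ᵥ ⇑(q (i:m))) : m → ℝ) ⬝ᵥ ((d (j:m))⁻¹ • (X *ᵥ ⇑(q (j:m))) : m → ℝ)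
      = if i = j then 1 else 0
    rw [smul_dotProduct, dotProduct_smul, hXq, hqij]
    by_cases hij : i = j
    · subst hij
      simp only [eq_self_iff_true, if_true]
      simp only [smul_eq_mul]
      field_simp
    · have hij' : (i : m) ≠ (j : m) := fun h => hij (Subtype.ext h)
      rw [if_neg hij', if_neg hij]
      simp
  have hcard : Module.finrank ℝ (EuclideanSpace ℝ m) = Fintype.card m :=
    finrank_euclideanSpace
  obtain ⟨b, hb⟩ := hvon.exists_orthonormalBasis_extension_of_card_eq hcard
  have hbij : ∀ i j, ⇑(b i) ⬝ᵥ ⇑(b j) = if i = j then 1 else 0 := by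
    intro i j
    have h := b.orthonormal
    rw [orthonormal_iff_ite] at h
    have h2 := h i j
    rw [inner_eq_dot] at h2
    simpa using h2
  set Q : Matrix m m ℝ := Matrix.of fun x j => q j x with hQ
  set U : Matrix m m ℝ := Matrix.of fun x j => b j x with hU
  have hQo : Qᵀ * Q = 1 := by
    ext i j
    rw [Matrix.mul_apply, Matrix.one_apply, ← hqij i j]
    simp [hQ, dotProduct]
  have hUo : Uᵀ * U = 1 := by
    ext i j
    rw [Matrix.mul_apply, Matrix.one_apply, ← hbij i j]
    simp [hU, dotProduct]
  have hQQt : Q * Qᵀ = 1 := mul_eq_one_comm.mp hQo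
  have hUUt : U * Uᵀ = 1 := mul_eq_one_comm.mp hUo
  refine ⟨U * Qᵀ, ?_, ?_⟩
  · rw [transpose_mul, transpose_transpose, Matrix.mul_assoc, ← Matrix.mul_assoc Uᵀ,
      hUo, Matrix.one_mul, hQQt]
  · have hQcol : ∀ j, Qᵀ *ᵥ ⇑(q j) = Pi.single j 1 := by
      intro j
      funext i
      have : (Qᵀ *ᵥ ⇑(q j)) i = ⇑(q i) ⬝ᵥ ⇑(q j) := by
        simp [Matrix.mulVec, dotProduct, hQ]
      rw [this, hqij i j, Pi.single_apply]
    have hUcol : ∀ j, U *ᵥ Pi.single j 1 = ⇑(b j) := by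
      intro j
      funext a
      simp [Matrix.mulVec_single, hU]
    have key : ∀ j, X *ᵥ ⇑(q j) = ((U * Qᵀ) * H) *ᵥ ⇑(q j) := by
      intro j
      have hrhs : ((U * Qᵀ) * H) *ᵥ ⇑(q j) = d j • ⇑(b j) := by
        rw [← Matrix.mulVec_mulVec, hmv, Matrix.mulVec_smul, ← Matrix.mulVec_mulVec,
          hQcol, hUcol]
      rw [hrhs]
      by_cases hdj : d j = 0
      · have hz : (X *ᵥ ⇑(q j)) ⬝ᵥ (X *ᵥ ⇑(q j)) = 0 := by
          rw [hXq j j, hqij j j, if_pos rfl, hdj]; ring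
        rw [dotProduct_self_eq_zero] at hz
        rw [hz, hdj, zero_smul]
      · have hjs : j ∈ s := hdj
        rw [hb j hjs, hv]
        show X *ᵥ ⇑(q j) = d j • ((d j)⁻¹ • (X *ᵥ ⇑(q j)))
        rw [smul_smul, mul_inv_cancel₀ hdj, one_smul]
    have hcols : X * Q = ((U * Qᵀ) * H) * Q := by
      ext a j
      have l1 : (X * Q) a j = (X *ᵥ ⇑(q j)) a := by
        simp [Matrix.mul_apply, Matrix.mulVec, dotProduct, hQ]
      have l2 : (((U * Qᵀ) * H) * Q) a j = (((U * Qᵀ) * H) *ᵥ ⇑(q j)) a := by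
        simp [Matrix.mul_apply, Matrix.mulVec, dotProduct, hQ]
      rw [l1, l2, key]
    calc X = X * (Q * Qᵀ) := by rw [hQQt, Matrix.mul_one]
      _ = (X * Q) * Qᵀ := by rw [Matrix.mul_assoc]
      _ = (((U * Qᵀ) * H) * Q) * Qᵀ := by rw [hcols]
      _ = ((U * Qᵀ) * H) * (Q * Qᵀ) := by rw [Matrix.mul_assoc]
      _ = (U * Qᵀ) * H := by rw [hQQt, Matrix.mul_one]

/-- trace of sqrt flip identity. -/
lemma trace_sq_flip (X : Matrix m m ℝ) :
    (sq (Xᵀ * X)).trace = (sq (X * Xᵀ)).trace := by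
  obtain ⟨W, hW, hX⟩ := polar X
  set H := sq (Xᵀ * X) with hHdef
  have hWWt : W * Wᵀ = 1 := mul_eq_one_comm.mp hW
  have hH : H.PosSemidef := sq_posSemidef (psd_transpose_mul_self X)
  have hHt : Hᵀ = H := sq_transpose (psd_transpose_mul_self X)
  have hXXt : X * Xᵀ = W * (H * H) * Wᵀ := by
    conv_lhs => rw [hX]
    rw [transpose_mul, hHt, Matrix.mul_assoc, ← Matrix.mul_assoc H, ← Matrix.mul_assoc,
      ← Matrix.mul_assoc]
  have hsq : sq (X * Xᵀ) = W * H * Wᵀ := by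
    refine sq_unique (psd_mul_mul_transpose hH W) ?_
    calc (W * H * Wᵀ) * (W * H * Wᵀ) = W * H * (Wᵀ * W) * (H * Wᵀ) := by
          simp only [Matrix.mul_assoc]
      _ = W * (H * H) * Wᵀ := by rw [hW]; simp only [Matrix.mul_assoc, Matrix.one_mul]
      _ = X * Xᵀ := hXXt.symm
  rw [hsq, trace_mul_comm, ← Matrix.mul_assoc, hW, Matrix.one_mul]


/-- the fidelity-type quantity `Tr sqrt(sqrt A * B * sqrt A)`. -/
noncomputable def fid (A B : Matrix m m ℝ) : ℝ := (sq (sq A * B * sq A)).trace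

lemma fid_nonneg {A B : Matrix m m ℝ} (hA : A.PosSemidef) (hB : B.PosSemidef) :
    0 ≤ fid A B := by
  refine trace_nonneg_of_psd (sq_posSemidef ?_)
  have := psd_mul_mul_transpose hB (sq A)
  rwa [sq_transpose hA] at this

/-- attainment: there is `Y` making the block matrix PSD with `Y.trace = fid A B`. -/
lemma fid_attained {A B : Matrix m m ℝ} (hA : A.PosSemidef) (hB : B.PosSemidef) :
    ∃ Y : Matrix m m ℝ, (fromBlocks A Y Yᵀ B).PosSemidef ∧ Y.trace = fid A B := by
  obtain ⟨W, hW, hG⟩ := polar (sq B * sq A)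
  have hWWt : W * Wᵀ = 1 := mul_eq_one_comm.mp hW
  have hGt : (sq B * sq A)ᵀ * (sq B * sq A) = sq A * B * sq A := by
    rw [transpose_mul, sq_transpose hA, sq_transpose hB]
    calc sq A * sq B * (sq B * sq A) = sq A * (sq B * sq B) * sq A := by
          simp only [Matrix.mul_assoc]
      _ = sq A * B * sq A := by rw [sq_mul_self hB]
  rw [hGt] at hG
  set H := sq (sq A * B * sq A) with hHdef
  set L₂ : Matrix m m ℝ := Wᵀ * sq B with hL₂
  refine ⟨sq A * Wᵀ * sq B, ?_, ?_⟩
  · have c11 : (sq A)ᵀ * sq A = A := by rw [sq_transpose hA, sq_mul_self hA]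
    have c12 : (sq A)ᵀ * L₂ = sq A * Wᵀ * sq B := by
      rw [sq_transpose hA, hL₂, Matrix.mul_assoc]
    have c21 : L₂ᵀ * sq A = (sq A * Wᵀ * sq B)ᵀ := by
      rw [hL₂, transpose_mul, transpose_mul, transpose_mul, transpose_transpose,
        sq_transpose hA, sq_transpose hB]
      simp only [Matrix.mul_assoc]
    have c22 : L₂ᵀ * L₂ = B := by
      rw [hL₂, transpose_mul, transpose_transpose, sq_transpose hB]
      calc sq B * W * (Wᵀ * sq B) = sq B * (W * Wᵀ) * sq B := by
            simp only [Matrix.mul_assoc]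
        _ = B := by rw [hWWt, Matrix.mul_one, sq_mul_self hB]
    have hblock : fromBlocks A (sq A * Wᵀ * sq B) (sq A * Wᵀ * sq B)ᵀ B
        = (fromBlocks (sq A) L₂ (0 : Matrix m m ℝ) (0 : Matrix m m ℝ))ᵀ *
          (fromBlocks (sq A) L₂ (0 : Matrix m m ℝ) (0 : Matrix m m ℝ)) := by
      rw [fromBlocks_transpose, fromBlocks_multiply]
      simp only [transpose_zero, Matrix.zero_mul, Matrix.mul_zero, add_zero]
      rw [c11, c12, c21, c22]
    rw [hblock]
    exact psd_transpose_mul_self _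
  · show (sq A * Wᵀ * sq B).trace = fid A B
    rw [Matrix.mul_assoc, trace_mul_comm, Matrix.mul_assoc, hG, ← Matrix.mul_assoc,
      hW, Matrix.one_mul]
    rfl

lemma eta_le_sqrt {η : ℝ} (h0 : 0 < η) (h1 : η ≤ 1) : η ≤ Real.sqrt η := by
  have h2 : η = Real.sqrt (η ^ 2) := (Real.sqrt_sq h0.le).symm
  calc η = Real.sqrt (η ^ 2) := h2
    _ ≤ Real.sqrt η := Real.sqrt_le_sqrt (by nlinarith)

lemma le_of_forall_small {a b c : ℝ} (hc : 0 ≤ c)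
    (h : ∀ η : ℝ, 0 < η → η ≤ 1 → a ≤ b + Real.sqrt η * c) : a ≤ b := by
  by_contra hlt
  push_neg at hlt
  set δ := (a - b) / (2 * (c + 1)) with hδ
  have hδpos : 0 < δ := div_pos (by linarith) (by linarith)
  set η := min 1 (δ ^ 2) with hη
  have hη1 : η ≤ 1 := min_le_left _ _
  have hηpos : 0 < η := lt_min one_pos (by positivity)
  have hsq : Real.sqrt η ≤ δ := by
    calc Real.sqrt η ≤ Real.sqrt (δ ^ 2) := Real.sqrt_le_sqrt (min_le_right _ _)
      _ = δ := Real.sqrt_sq hδpos.le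
  have h4 := h η hηpos hη1
  have h2 : Real.sqrt η * c ≤ δ * c := mul_le_mul_of_nonneg_right hsq hc
  have h3 : δ * c ≤ (a - b) / 2 := by
    rw [hδ, div_mul_eq_mul_div, div_le_div_iff₀ (by linarith) (by norm_num)]
    nlinarith
  linarith

/-- upper bound: if the block matrix is PSD then `Y.trace ≤ fid A B`. -/
lemma fid_bound {A B Y : Matrix m m ℝ} (hA : A.PosSemidef) (hB : B.PosSemidef)
    (hblock : (fromBlocks A Y Yᵀ B).PosSemidef) : Y.trace ≤ fid A B := by
  classical
  set Mb := fromBlocks A Y Yᵀ B with hMb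
  have hRR : sq Mb * sq Mb = Mb := sq_mul_self hblock
  have hRsym : ∀ a b, sq Mb a b = sq Mb b a := by
    intro a b
    have := congrFun (congrFun (sq_transpose hblock) a) b
    rw [Matrix.transpose_apply] at this
    exact this.symm
  have entry : ∀ a b, (∑ x, sq Mb x a * sq Mb x b) = Mb a b := by
    intro a b
    have h1 : (∑ x, sq Mb x a * sq Mb x b) = (sq Mb * sq Mb) a b := by
      rw [Matrix.mul_apply]
      exact Finset.sum_congr rfl fun x _ => by rw [hRsym x a]
    rw [h1, hRR]
  set L₁ : Matrix (m ⊕ m) m ℝ := (sq Mb).submatrix id Sum.inl with hL₁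
  set L₂ : Matrix (m ⊕ m) m ℝ := (sq Mb).submatrix id Sum.inr with hL₂
  have h11 : L₁ᵀ * L₁ = A := by
    ext i j
    rw [Matrix.mul_apply]
    simp only [hL₁, Matrix.transpose_apply, Matrix.submatrix_apply, id_eq]
    rw [entry (Sum.inl i) (Sum.inl j), hMb]
    simp
  have h12 : L₁ᵀ * L₂ = Y := by
    ext i j
    rw [Matrix.mul_apply]
    simp only [hL₁, hL₂, Matrix.transpose_apply, Matrix.submatrix_apply, id_eq]
    rw [entry (Sum.inl i) (Sum.inr j), hMb]
    simp
  have h22 : L₂ᵀ * L₂ = B := by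
    ext i j
    rw [Matrix.mul_apply]
    simp only [hL₂, Matrix.transpose_apply, Matrix.submatrix_apply, id_eq]
    rw [entry (Sum.inr i) (Sum.inr j), hMb]
    simp
  -- now the η-perturbation argument
  have main : ∀ η : ℝ, 0 < η → η ≤ 1 →
      Y.trace ≤ fid A B + Real.sqrt η * ((sq B).trace + (Fintype.card m : ℝ) / 2) := by
    intro η hη hη1
    set Aη := A + η • (1 : Matrix m m ℝ) with hAη
    have hAηpd : Aη.PosDef := Matrix.PosDef.posSemidef_add hA (pd_smul_one hη)
    set sA := sq Aη with hsA
    have hsApd : sA.PosDef := sq_posDef hAηpd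
    have hsAsq : sA * sA = Aη := sq_mul_self hAηpd.posSemidef
    have hsAt : sAᵀ = sA := sq_transpose hAηpd.posSemidef
    set G := sA⁻¹ with hG
    have hGpd : G.PosDef := hsApd.inv
    have hGt : Gᵀ = G := by rw [hG, Matrix.transpose_nonsing_inv, hsAt]
    have hGsA : G * sA = 1 := pd_inv_mul hsApd
    have hsAG : sA * G = 1 := pd_mul_inv hsApd
    have hNpsd : (sA * B * sA).PosSemidef := by
      have := psd_mul_mul_transpose hB sA
      rwa [hsAt] at this
    set N := sq (sA * B * sA) with hN
    have hNp : N.PosSemidef := sq_posSemidef hNpsd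
    have hNsq : N * N = sA * B * sA := sq_mul_self hNpsd
    set N' := N + η • (1 : Matrix m m ℝ) with hN'
    have hN'pd : N'.PosDef := Matrix.PosDef.posSemidef_add hNp (pd_smul_one hη)
    set X := G * N' * G with hX
    have hXpd : X.PosDef := by
      have := pd_mul_mul_transpose hN'pd (pd_isUnit_det hGpd)
      rwa [hGt, ← hX] at this
    have hcs := cs_trace L₁ L₂ hXpd
    rw [h11, h12, h22] at hcs
    have hGAG' : G * (Aη * G) = 1 := by
      rw [← hsAsq]
      calc G * (sA * sA * G) = (G * sA) * (sA * G) := by simp only [Matrix.mul_assoc]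
        _ = 1 := by rw [hGsA, hsAG, Matrix.mul_one]
    have hGAG : G * Aη * G = 1 := by rw [Matrix.mul_assoc]; exact hGAG'
    have e1 : (Aη * X).trace = N'.trace := by
      have h1 : Aη * X = (Aη * G * N') * G := by rw [hX]; simp only [Matrix.mul_assoc]
      have h2 : G * (Aη * G * N') = N' := by
        rw [← Matrix.mul_assoc, hGAG', Matrix.one_mul]
      rw [h1, trace_mul_comm, h2]
    have b1 : (A * X).trace ≤ N'.trace := by
      rw [← e1, trace_mul_comm A X, trace_mul_comm Aη X]
      refine trace_mul_mono hXpd.posSemidef ?_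
      have : Aη - A = η • (1 : Matrix m m ℝ) := by rw [hAη]; abel
      rw [this]
      exact (pd_smul_one hη).posSemidef
    have hXinv : X⁻¹ = sA * N'⁻¹ * sA := by
      rw [hX, Matrix.mul_inv_rev, Matrix.mul_inv_rev, hG,
        Matrix.nonsing_inv_nonsing_inv _ (pd_isUnit_det hsApd), Matrix.mul_assoc]
    have b2 : (B * X⁻¹).trace ≤ N.trace := by
      rw [hXinv]
      have e2 : (B * (sA * N'⁻¹ * sA)).trace = (N * N * N'⁻¹).trace := by
        have h1 : B * (sA * N'⁻¹ * sA) = (B * sA * N'⁻¹) * sA := by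
          simp only [Matrix.mul_assoc]
        have h2 : sA * (B * sA * N'⁻¹) = (N * N) * N'⁻¹ := by
          rw [hNsq]; simp only [Matrix.mul_assoc]
        rw [h1, trace_mul_comm, h2]
      rw [e2, hN']
      exact trace_sq_sq_inv_le hNp hη
    have hN'tr : N'.trace = N.trace + η * (Fintype.card m : ℝ) := by
      rw [hN', trace_add, trace_smul, trace_one, smul_eq_mul]
    -- flip bound for N.trace
    have flip1 : N.trace = (sq (sq B * Aη * sq B)).trace := by
      have hZ : sA * B * sA = (sq B * sA)ᵀ * (sq B * sA) := by
        rw [transpose_mul, sq_transpose hB, hsAt]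
        calc sA * B * sA = sA * (sq B * sq B) * sA := by rw [sq_mul_self hB]
          _ = sA * sq B * (sq B * sA) := by simp only [Matrix.mul_assoc]
      have hZ2 : (sq B * sA) * (sq B * sA)ᵀ = sq B * Aη * sq B := by
        rw [transpose_mul, sq_transpose hB, hsAt]
        calc sq B * sA * (sA * sq B) = sq B * (sA * sA) * sq B := by
              simp only [Matrix.mul_assoc]
          _ = sq B * Aη * sq B := by rw [hsAsq]
      rw [hN, hZ, trace_sq_flip (sq B * sA), hZ2]
    have flip2 : (sq (sq B * A * sq B)).trace = fid A B := by
      have hZ : sq B * A * sq B = (sq A * sq B)ᵀ * (sq A * sq B) := by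
        rw [transpose_mul, sq_transpose hA, sq_transpose hB]
        calc sq B * A * sq B = sq B * (sq A * sq A) * sq B := by rw [sq_mul_self hA]
          _ = sq B * sq A * (sq A * sq B) := by simp only [Matrix.mul_assoc]
      have hZ2 : (sq A * sq B) * (sq A * sq B)ᵀ = sq A * B * sq A := by
        rw [transpose_mul, sq_transpose hA, sq_transpose hB]
        calc sq A * sq B * (sq B * sq A) = sq A * (sq B * sq B) * sq A := by
              simp only [Matrix.mul_assoc]
          _ = sq A * B * sq A := by rw [sq_mul_self hB]
      rw [hZ, trace_sq_flip (sq A * sq B), hZ2, fid]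
    have hdecomp : sq B * Aη * sq B = sq B * A * sq B + η • B := by
      rw [hAη, Matrix.mul_add, Matrix.add_mul, Matrix.mul_smul, Matrix.smul_mul,
        Matrix.mul_one, sq_mul_self hB]
    have hBA : (sq B * A * sq B).PosSemidef := by
      have := psd_mul_mul_transpose hA (sq B)
      rwa [sq_transpose hB] at this
    have hsub : (sq (sq B * Aη * sq B)).trace
        ≤ (sq (sq B * A * sq B)).trace + (sq (η • B)).trace := by
      rw [hdecomp]
      exact trace_sq_subadd hBA (psd_smul hB hη.le)
    have hsmul : (sq (η • B)).trace = Real.sqrt η * (sq B).trace := by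
      rw [sq_smul hB hη.le, trace_smul, smul_eq_mul]
    have hflipbound : N.trace ≤ fid A B + Real.sqrt η * (sq B).trace := by
      rw [flip1]
      calc (sq (sq B * Aη * sq B)).trace
          ≤ (sq (sq B * A * sq B)).trace + (sq (η • B)).trace := hsub
        _ = fid A B + Real.sqrt η * (sq B).trace := by rw [flip2, hsmul]
    -- combine
    have hηs : η * (Fintype.card m : ℝ) / 2 ≤ Real.sqrt η * (Fintype.card m : ℝ) / 2 := by
      have := eta_le_sqrt hη hη1
      have hcard : (0 : ℝ) ≤ (Fintype.card m : ℝ) := Nat.cast_nonneg _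
      apply div_le_div_of_nonneg_right ?_ (by norm_num)
      exact mul_le_mul_of_nonneg_right this hcard
    calc Y.trace ≤ ((A * X).trace + (B * X⁻¹).trace) / 2 := hcs
      _ ≤ (N'.trace + N.trace) / 2 := by linarith
      _ = N.trace + η * (Fintype.card m : ℝ) / 2 := by rw [hN'tr]; ring
      _ ≤ fid A B + Real.sqrt η * (sq B).trace + Real.sqrt η * (Fintype.card m : ℝ) / 2 := by
          linarith
      _ = fid A B + Real.sqrt η * ((sq B).trace + (Fintype.card m : ℝ) / 2) := by ring
  refine le_of_forall_small ?_ main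
  have : 0 ≤ (sq B).trace := trace_nonneg_of_psd (sq_posSemidef hB)
  positivity


lemma fid_def (A B : Matrix m m ℝ) : fid A B = (sq (sq A * B * sq A)).trace := rfl

lemma psd_fromBlocks_diag {k l : Type*} [Fintype k] [DecidableEq k] [Fintype l]
    [DecidableEq l] {P : Matrix k k ℝ} {Q : Matrix l l ℝ}
    (hP : P.PosSemidef) (hQ : Q.PosSemidef) :
    (fromBlocks P (0 : Matrix k l ℝ) (0 : Matrix l k ℝ) Q).PosSemidef := by
  have h : fromBlocks P (0 : Matrix k l ℝ) (0 : Matrix l k ℝ) Q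
      = (fromBlocks (sq P) 0 0 (sq Q))ᵀ * fromBlocks (sq P) 0 0 (sq Q) := by
    rw [fromBlocks_transpose, fromBlocks_multiply]
    simp only [transpose_zero, Matrix.zero_mul, Matrix.mul_zero, add_zero, zero_add,
      sq_transpose hP, sq_transpose hQ, sq_mul_self hP, sq_mul_self hQ]
  rw [h]
  exact psd_transpose_mul_self _

lemma schur_psd_iff {k l : Type*} [Fintype k] [DecidableEq k] [Fintype l] [DecidableEq l]
    {A' : Matrix k k ℝ} {B' : Matrix k l ℝ} {D : Matrix l l ℝ} (hD : D.PosDef) :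
    (fromBlocks A' B' B'ᵀ D).PosSemidef ↔ (A' - B' * D⁻¹ * B'ᵀ).PosSemidef := by
  haveI := Matrix.invertibleOfIsUnitDet D (pd_isUnit_det hD)
  have h := Matrix.PosDef.fromBlocks₂₂ A' B' hD
  rwa [conjT B'] at h

end DRKF

open DRKF

lemma psdSqrt_eq_sq {k : ℕ} (M : Matrix (Fin k) (Fin k) ℝ) : psdSqrt M = DRKF.sq M := by
  by_cases h : M.PosSemidef
  · open scoped MatrixOrder in
    rw [sq_of_psd h, CFC.sqrt_eq_cfc, cfc_nnreal_eq_real _ M h.nonneg, h.1.cfc_eq,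
      IsHermitian.cfc, Unitary.conjStarAlgAut_apply, psdSqrt, dif_pos h]
    have hf : Real.sqrt = fun x => ((NNReal.sqrt x.toNNReal : NNReal) : ℝ) := by
      funext x; rw [Real.sqrt]
    rw [hf]
  · rw [show psdSqrt M = 0 from dif_neg h, show DRKF.sq M = 0 from dif_neg h]

/-- Proposition 1: the worst-case covariance problem combined with the
distributionally robust Kalman filter update (i) has the same optimal value as the
tractable SDP (ii). -/
theorem worst_case_sdp_equivalence {nx ny : ℕ}
    (S : Matrix (Fin nx) (Fin nx) ℝ) (hS : S.PosSemidef)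
    (lam : ℝ) (hlam : 0 < lam)
    (P : Matrix (Fin nx) (Fin nx) ℝ) (hP : P.IsHermitian)
    (hPlam : (lam • (1 : Matrix (Fin nx) (Fin nx) ℝ) - P).PosDef)
    (A : Matrix (Fin nx) (Fin nx) ℝ) (C : Matrix (Fin ny) (Fin nx) ℝ)
    (Sigprev : Matrix (Fin nx) (Fin nx) ℝ) (hSigprev : Sigprev.PosSemidef)
    (Sighatw : Matrix (Fin nx) (Fin nx) ℝ) (hSighatw : Sighatw.PosSemidef)
    (Sighatv : Matrix (Fin ny) (Fin ny) ℝ) (hSighatv : Sighatv.PosDef)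
    (θv : ℝ) (hθv : 0 < θv) :
    sSup {val : ℝ |
      ∃ (Sigw : Matrix (Fin nx) (Fin nx) ℝ) (Sigv : Matrix (Fin ny) (Fin ny) ℝ),
        Sigw.PosSemidef ∧ Sigv.PosDef ∧
        (Sigv + Sighatv
          - (2 : ℝ) • psdSqrt (psdSqrt Sighatv * Sigv * psdSqrt Sighatv)).trace ≤ θv ^ 2 ∧
        val =
          (S * ((A * Sigprev * Aᵀ + Sigw)
              - (A * Sigprev * Aᵀ + Sigw) * Cᵀ
                * (C * (A * Sigprev * Aᵀ + Sigw) * Cᵀ + Sigv)⁻¹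
                * C * (A * Sigprev * Aᵀ + Sigw))).trace
          + ((P - lam • (1 : Matrix (Fin nx) (Fin nx) ℝ)) * Sigw).trace
          + 2 * lam * (psdSqrt (psdSqrt Sighatw * Sigw * psdSqrt Sighatw)).trace} =
    sSup {val : ℝ |
      ∃ (Sigminus Sigx Sigw : Matrix (Fin nx) (Fin nx) ℝ)
        (Sigv : Matrix (Fin ny) (Fin ny) ℝ)
        (Y : Matrix (Fin nx) (Fin nx) ℝ) (Z : Matrix (Fin ny) (Fin ny) ℝ),
        Sigminus.PosSemidef ∧ Sigx.PosSemidef ∧ Sigw.PosSemidef ∧ Sigv.PosDef ∧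
        (Matrix.fromBlocks (Sigminus - Sigx) (Sigminus * Cᵀ)
          (C * Sigminus) (C * Sigminus * Cᵀ + Sigv)).PosSemidef ∧
        (Matrix.fromBlocks Sighatw Y Yᵀ Sigw).PosSemidef ∧
        (Matrix.fromBlocks Sighatv Z Zᵀ Sigv).PosSemidef ∧
        Sigminus = A * Sigprev * Aᵀ + Sigw ∧
        (Sigv + Sighatv - (2 : ℝ) • Z).trace ≤ θv ^ 2 ∧
        val = (S * Sigx).trace
          + ((P - lam • (1 : Matrix (Fin nx) (Fin nx) ℝ)) * Sigw).trace
          + 2 * lam * Y.trace} := by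
  classical
  apply csSup_eq_csSup_of_forall_exists_le
  · -- every value of (i) is attained in (ii)
    rintro x ⟨Sigw, Sigv, hSw, hSv, hcons, rfl⟩
    set Sm : Matrix (Fin nx) (Fin nx) ℝ := A * Sigprev * Aᵀ + Sigw with hSm_def
    have hSm : Sm.PosSemidef := (psd_mul_mul_transpose hSigprev A).add hSw
    have hSmT : Smᵀ = Sm := psd_transpose_eq hSm
    set D : Matrix (Fin ny) (Fin ny) ℝ := C * Sm * Cᵀ + Sigv with hD_def
    have hD : D.PosDef := Matrix.PosDef.posSemidef_add (psd_mul_mul_transpose hSm C) hSv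
    set Bp : Matrix (Fin nx) (Fin ny) ℝ := Sm * Cᵀ with hBp_def
    have hBpT : Bpᵀ = C * Sm := by
      rw [hBp_def, transpose_mul, transpose_transpose, hSmT]
    set Sx : Matrix (Fin nx) (Fin nx) ℝ := Sm - Sm * Cᵀ * D⁻¹ * C * Sm with hSx_def
    have hSchur : Sm - Bp * D⁻¹ * Bpᵀ = Sx := by
      rw [hSx_def, hBp_def, hBpT]
      congr 1
      simp only [Matrix.mul_assoc]
    have hdiag : (fromBlocks Sm (0 : Matrix (Fin nx) (Fin ny) ℝ)
        (0 : Matrix (Fin ny) (Fin nx) ℝ) Sigv).PosSemidef :=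
      psd_fromBlocks_diag hSm hSv.posSemidef
    set E := fromBlocks (1 : Matrix (Fin nx) (Fin nx) ℝ) (0 : Matrix (Fin nx) (Fin ny) ℝ)
      C (1 : Matrix (Fin ny) (Fin ny) ℝ) with hE_def
    have hbig : (fromBlocks Sm Bp Bpᵀ D).PosSemidef := by
      have hcomp : E * (fromBlocks Sm 0 0 Sigv) * Eᵀ = fromBlocks Sm Bp Bpᵀ D := by
        rw [hE_def, fromBlocks_transpose, fromBlocks_multiply, fromBlocks_multiply]
        simp only [Matrix.one_mul, Matrix.mul_one, Matrix.zero_mul, Matrix.mul_zero,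
          add_zero, zero_add, transpose_one, transpose_zero]
        rw [hBpT, hBp_def, hD_def]
      rw [← hcomp]
      exact psd_mul_mul_transpose hdiag E
    have hSxpsd : Sx.PosSemidef := by
      have h := (schur_psd_iff hD).mp hbig
      rwa [hSchur] at h
    have hblock1 : (fromBlocks (Sm - Sx) Bp Bpᵀ D).PosSemidef := by
      apply (schur_psd_iff hD).mpr
      have h0 : Sm - Sx - Bp * D⁻¹ * Bpᵀ = 0 := by
        rw [← hSchur]
        abel
      rw [h0]
      exact Matrix.PosSemidef.zero
    have hblock1' : (fromBlocks (Sm - Sx) (Sm * Cᵀ) (C * Sm)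
        (C * Sm * Cᵀ + Sigv)).PosSemidef := by
      have h := hblock1
      rw [hBpT] at h
      exact h
    obtain ⟨Yw, hYw, hYtr⟩ := fid_attained hSighatw hSw
    obtain ⟨Zv, hZv, hZtr⟩ := fid_attained hSighatv.posSemidef hSv.posSemidef
    simp only [psdSqrt_eq_sq] at hcons ⊢
    have hconstr : (Sigv + Sighatv - (2 : ℝ) • Zv).trace ≤ θv ^ 2 := by
      rw [trace_sub, trace_add, trace_smul, smul_eq_mul, hZtr, fid_def]
      rw [trace_sub, trace_add, trace_smul, smul_eq_mul] at hcons
      exact hcons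
    refine ⟨(S * Sx).trace + ((P - lam • (1 : Matrix (Fin nx) (Fin nx) ℝ)) * Sigw).trace
      + 2 * lam * Yw.trace,
      ⟨Sm, Sx, Sigw, Sigv, Yw, Zv, hSm, hSxpsd, hSw, hSv, hblock1', hYw, hZv, hSm_def,
        hconstr, rfl⟩, ?_⟩
    have hfid : (DRKF.sq (DRKF.sq Sighatw * Sigw * DRKF.sq Sighatw)).trace
        = Yw.trace := by rw [hYtr, fid_def]
    rw [hfid]
  · -- every value of (ii) is dominated by a value of (i)
    rintro x ⟨Sigminus, Sigx, Sigw, Sigv, Y, Z, hSmm, hSx, hSw, hSv, hb1, hb2, hb3,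
      hSmeq, htr, rfl⟩
    subst hSmeq
    set Sm : Matrix (Fin nx) (Fin nx) ℝ := A * Sigprev * Aᵀ + Sigw with hSm_def
    have hSm : Sm.PosSemidef := (psd_mul_mul_transpose hSigprev A).add hSw
    have hSmT : Smᵀ = Sm := psd_transpose_eq hSm
    set D : Matrix (Fin ny) (Fin ny) ℝ := C * Sm * Cᵀ + Sigv with hD_def
    have hD : D.PosDef := Matrix.PosDef.posSemidef_add (psd_mul_mul_transpose hSm C) hSv
    set Bp : Matrix (Fin nx) (Fin ny) ℝ := Sm * Cᵀ with hBp_def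
    have hBpT : Bpᵀ = C * Sm := by
      rw [hBp_def, transpose_mul, transpose_transpose, hSmT]
    set Sxs : Matrix (Fin nx) (Fin nx) ℝ := Sm - Sm * Cᵀ * D⁻¹ * C * Sm with hSxs_def
    have hSchur : Sm - Bp * D⁻¹ * Bpᵀ = Sxs := by
      rw [hSxs_def, hBp_def, hBpT]
      congr 1
      simp only [Matrix.mul_assoc]
    refine ⟨(S * Sxs).trace + ((P - lam • (1 : Matrix (Fin nx) (Fin nx) ℝ)) * Sigw).trace
      + 2 * lam * (psdSqrt (psdSqrt Sighatw * Sigw * psdSqrt Sighatw)).trace,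
      ⟨Sigw, Sigv, hSw, hSv, ?_, rfl⟩, ?_⟩
    · -- constraint of (i)
      simp only [psdSqrt_eq_sq]
      have hZle : Z.trace ≤ fid Sighatv Sigv :=
        fid_bound hSighatv.posSemidef hSv.posSemidef hb3
      rw [trace_sub, trace_add, trace_smul, smul_eq_mul] at htr ⊢
      rw [fid_def] at hZle
      linarith
    · -- domination
      have hYle : Y.trace ≤ fid Sighatw Sigw := fid_bound hSighatw hSw hb2
      have hb1' : (fromBlocks (Sm - Sigx) Bp Bpᵀ D).PosSemidef := by
        rw [hBpT]
        exact hb1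
      have hdiff : (Sxs - Sigx).PosSemidef := by
        have h := (schur_psd_iff hD).mp hb1'
        have h0 : Sm - Sigx - Bp * D⁻¹ * Bpᵀ = Sxs - Sigx := by
          rw [← hSchur]
          abel
        rwa [h0] at h
      have hSle : (S * Sigx).trace ≤ (S * Sxs).trace := trace_mul_mono hS hdiff
      have hfid : (psdSqrt (psdSqrt Sighatw * Sigw * psdSqrt Sighatw)).trace
          = fid Sighatw Sigw := by
        simp only [psdSqrt_eq_sq]
        rw [fid_def]
      rw [hfid]
      have h2lam : 2 * lam * Y.trace ≤ 2 * lam * fid Sighatw Sigw := by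
        apply mul_le_mul_of_nonneg_left hYle
        linarith
      linarith
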